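/- Assume α̃ < 1 (hence 0 < r < 1). Then the conditional mean queue length in a working vacation period satisfies E[L₀] = (Σ_{k≥1} k·π_{k0}) / (Σ_{k≥0} π_{k0}) = p(0)θ̄ / (θ + θ̄μ_v(1−r)). -/

import Mathlib

/-!
The rate `r` is the smaller root of `p̄(0)μ_v x² - (β + p(0)μ̄_v + p̄(0)μ_v) x + p(0)μ̄_v`, which
is positive at `0` and negative at `1`, so `0 < r < 1`. Then `k ↦ π_{k0}` has a geometric tail,
`Σ k π_{k0} = c / (1 - r)²` and `Σ π_{k0} = π_{00} + c / (1 - r)` with `c = K p(0) θ̄ (1 - r)`.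
The constant `K` cancels in the ratio, and the root equation turns
`(1 - r) (θ + θ̄ p̄(0) μ_v (1 - r) + p(0) θ̄)` into `θ + θ̄ μ_v (1 - r)`.
-/

open Real

section SmallerRoot

variable {a b c : ℝ}

theorem four_mul_mul_lt_sq_of_add_lt (ha : 0 < a) (hc : 0 < c) (hb : a + c < b) :
    4 * a * c < b ^ 2 := by
  nlinarith [sq_nonneg (a - c)]

theorem quadratic_eq_zero_of_eq_sub_sqrt (ha : a ≠ 0) (hd : 0 ≤ b ^ 2 - 4 * a * c) {r : ℝ}
    (hr : r = (b - √(b ^ 2 - 4 * a * c)) / (2 * a)) : a * r ^ 2 - b * r + c = 0 := by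
  have hs := Real.sq_sqrt hd
  set s := √(b ^ 2 - 4 * a * c)
  have h2 : 2 * a * r = b - s := by rw [hr]; field_simp
  have h4 : (4 * a) * (a * r ^ 2 - b * r + c) = 0 := by
    linear_combination (2 * a * r - b - s) * h2 + hs
  exact (mul_eq_zero.1 h4).resolve_left (by positivity)

theorem sub_sqrt_div_mem_Ioo (ha : 0 < a) (hc : 0 < c) (hb : a + c < b) :
    (b - √(b ^ 2 - 4 * a * c)) / (2 * a) ∈ Set.Ioo 0 1 := by
  have hsb : √(b ^ 2 - 4 * a * c) < b :=
    (Real.sqrt_lt' (by linarith)).2 (by nlinarith [mul_pos ha hc])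
  have hbs : b - 2 * a < √(b ^ 2 - 4 * a * c) :=
    Real.lt_sqrt_of_sq_lt (by nlinarith)
  constructor
  · exact div_pos (by linarith) (by linarith)
  · rw [div_lt_one (by linarith)]
    linarith

end SmallerRoot

section GeometricTail

variable {f : ℕ → ℝ} {c r : ℝ}

theorem hasSum_of_succ_eq_geometric (hr : |r| < 1) (hf : ∀ n, f (n + 1) = c * r ^ n) :
    HasSum f (f 0 + c * (1 - r)⁻¹) := by
  rw [← hasSum_nat_add_iff' 1]
  simpa [hf, add_sub_cancel_left] using (hasSum_geometric_of_abs_lt_one hr).mul_left c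

theorem hasSum_nat_mul_of_succ_eq_geometric (hr : |r| < 1) (hf : ∀ n, f (n + 1) = c * r ^ n) :
    HasSum (fun k : ℕ => (k : ℝ) * f k) (c / (1 - r) ^ 2) := by
  have hr1 : 1 - r ≠ 0 := by linarith [(abs_lt.1 hr).2]
  rw [← hasSum_nat_add_iff' 1, Finset.sum_range_one, Nat.cast_zero, zero_mul, sub_zero]
  have hsum := ((hasSum_coe_mul_geometric_of_norm_lt_one (r := r) hr).add
    (hasSum_geometric_of_abs_lt_one hr)).mul_left c
  rw [show c * (r / (1 - r) ^ 2 + (1 - r)⁻¹) = c / (1 - r) ^ 2 by field_simp; ring] at hsum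
  refine hsum.congr_fun fun n => ?_
  rw [hf]
  push_cast
  ring

end GeometricTail

theorem vacation_root_mem_Ioo_and_isRoot {μv p0 be r : ℝ} (hμv : μv ∈ Set.Ioo (0:ℝ) 1)
    (hp0 : p0 ∈ Set.Ioo (0:ℝ) 1) (hbe : 0 < be)
    (hr : r = (be + p0 * (1 - μv) + (1 - p0) * μv -
        √((be + p0 * (1 - μv) + (1 - p0) * μv) ^ 2 -
          4 * p0 * (1 - p0) * μv * (1 - μv))) / (2 * (1 - p0) * μv)) :
    r ∈ Set.Ioo 0 1 ∧ (1 - p0) * μv * r ^ 2 - (be + p0 * (1 - μv) + (1 - p0) * μv) * r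
      + p0 * (1 - μv) = 0 := by
  have ha : 0 < (1 - p0) * μv := mul_pos (sub_pos.2 hp0.2) hμv.1
  have hc : 0 < p0 * (1 - μv) := mul_pos hp0.1 (sub_pos.2 hμv.2)
  have hb : (1 - p0) * μv + p0 * (1 - μv) < be + p0 * (1 - μv) + (1 - p0) * μv := by linarith
  have hr' : r = (be + p0 * (1 - μv) + (1 - p0) * μv - √((be + p0 * (1 - μv) + (1 - p0) * μv) ^ 2
      - 4 * ((1 - p0) * μv) * (p0 * (1 - μv)))) / (2 * ((1 - p0) * μv)) := by
    rw [hr]; ring_nf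
  exact ⟨hr' ▸ sub_sqrt_div_mem_Ioo ha hc hb, quadratic_eq_zero_of_eq_sub_sqrt ha.ne'
    (sub_nonneg.2 (four_mul_mul_lt_sq_of_add_lt ha hc hb).le) hr'⟩

/-- The bracket on the left is `Σ_k π_{k0} / K`. -/
theorem one_sub_mul_vacation_mass_eq {θ μv p0 be r : ℝ} (hbe : be * (1 - θ) = θ)
    (hr : (1 - p0) * μv * r ^ 2 - (be + p0 * (1 - μv) + (1 - p0) * μv) * r
      + p0 * (1 - μv) = 0) :
    (1 - r) * (θ + (1 - θ) * (1 - p0) * μv * (1 - r) + p0 * (1 - θ))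
      = θ + (1 - θ) * μv * (1 - r) := by
  linear_combination (1 - θ) * hr + r * hbe

theorem stmt_8_general
    (μb μv θ p0 p1 al be r K : ℝ) (π0 : ℕ → ℝ)
    (hμb : μb ∈ Set.Ioo (0:ℝ) 1)
    (hμv : μv ∈ Set.Ioo (0:ℝ) 1) (hθ : θ ∈ Set.Ioo (0:ℝ) 1)
    (hp0m : p0 ∈ Set.Ioo (0:ℝ) 1) (hp1m : p1 ∈ Set.Ioo (0:ℝ) 1)
    (hbe : be = θ / (1 - θ))
    (hr : r = (be + p0 * (1 - μv) + (1 - p0) * μv -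
        Real.sqrt ((be + p0 * (1 - μv) + (1 - p0) * μv) ^ 2 -
          4 * p0 * (1 - p0) * μv * (1 - μv))) / (2 * (1 - p0) * μv))
    (hK : K = (1 - p1) * μb * (1 - r) * (1 - al) /
        ((1 - p1) * μb * (1 - r) * (1 - al) *
          (θ + (1 - θ) * (1 - p0) * μv * (1 - r) + p0 * (1 - θ)) + p0 * θ))
    (hπ00 : π0 0 = K * (θ + (1 - θ) * (1 - p0) * μv * (1 - r)))
    (hπ0k : ∀ k : ℕ, 1 ≤ k → π0 k = K * p0 * (1 - θ) * (1 - r) * r ^ (k - 1))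
    (hal1 : al < 1) :
    Summable (fun k : ℕ => (k : ℝ) * π0 k) ∧
    (∑' k : ℕ, (k : ℝ) * π0 k) / (∑' k : ℕ, π0 k)
      = p0 * (1 - θ) / (θ + (1 - θ) * μv * (1 - r)) := by
  obtain ⟨hθ0, hθ1⟩ := hθ
  have hθ' : 0 < 1 - θ := sub_pos.2 hθ1
  obtain ⟨⟨hr0, hr1⟩, hroot⟩ :=
    vacation_root_mem_Ioo_and_isRoot hμv hp0m (hbe ▸ div_pos hθ0 hθ') hr
  have hr1' : 0 < 1 - r := sub_pos.2 hr1
  have hY : 0 < θ + (1 - θ) * μv * (1 - r) := by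
    have := hμv.1
    positivity
  have hK0 : 0 < K := by
    have := hμb.1; have := hμv.1; have := hp0m.1
    have := sub_pos.2 hp0m.2; have := sub_pos.2 hp1m.2; have := sub_pos.2 hal1
    rw [hK]
    positivity
  have hsucc : ∀ n, π0 (n + 1) = K * p0 * (1 - θ) * (1 - r) * r ^ n := fun n => by
    simpa using hπ0k (n + 1) n.succ_pos
  have hr_abs : |r| < 1 := abs_lt.2 ⟨by linarith, hr1⟩
  have hnum := hasSum_nat_mul_of_succ_eq_geometric hr_abs hsucc
  refine ⟨hnum.summable, ?_⟩
  rw [hnum.tsum_eq, (hasSum_of_succ_eq_geometric hr_abs hsucc).tsum_eq, hπ00]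
  have hmass := one_sub_mul_vacation_mass_eq (by rw [hbe]; field_simp) hroot
  rw [show K * (θ + (1 - θ) * (1 - p0) * μv * (1 - r)) + K * p0 * (1 - θ) * (1 - r) * (1 - r)⁻¹
      = K * (θ + (1 - θ) * μv * (1 - r)) / (1 - r) by rw [← hmass]; field_simp]
  field_simp

/-- Geo/Geo/1 with multiple working vacations, partially observable case.
Conditional mean queue length in a working vacation period:
E[L₀] = (Σ_{k≥1} k π_{k0}) / (Σ_{k≥0} π_{k0}) = p(0)θ̄ / (θ + θ̄ μ_v (1-r)). -/
theorem stmt_8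
    (p μb μv θ q0 q1 p0 p1 al be r K : ℝ) (π0 π1 : ℕ → ℝ)
    (hp : p ∈ Set.Ioo (0:ℝ) 1) (hμb : μb ∈ Set.Ioo (0:ℝ) 1)
    (hμv : μv ∈ Set.Ioo (0:ℝ) 1) (hθ : θ ∈ Set.Ioo (0:ℝ) 1)
    (hq0 : q0 ∈ Set.Icc (0:ℝ) 1) (hq1 : q1 ∈ Set.Icc (0:ℝ) 1)
    (hp0 : p0 = p * q0) (hp1 : p1 = p * q1)
    (hp0m : p0 ∈ Set.Ioo (0:ℝ) 1) (hp1m : p1 ∈ Set.Ioo (0:ℝ) 1)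
    (hal : al = p1 * (1 - μb) / ((1 - p1) * μb))
    (hbe : be = θ / (1 - θ))
    (hr : r = (be + p0 * (1 - μv) + (1 - p0) * μv -
        Real.sqrt ((be + p0 * (1 - μv) + (1 - p0) * μv) ^ 2 -
          4 * p0 * (1 - p0) * μv * (1 - μv))) / (2 * (1 - p0) * μv))
    (hK : K = (1 - p1) * μb * (1 - r) * (1 - al) /
        ((1 - p1) * μb * (1 - r) * (1 - al) *
          (θ + (1 - θ) * (1 - p0) * μv * (1 - r) + p0 * (1 - θ)) + p0 * θ))
    (hπ00 : π0 0 = K * (θ + (1 - θ) * (1 - p0) * μv * (1 - r)))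
    (hπ0k : ∀ k : ℕ, 1 ≤ k → π0 k = K * p0 * (1 - θ) * (1 - r) * r ^ (k - 1))
    (hπ1k : ∀ k : ℕ, 1 ≤ k →
      π1 k = K * (p0 * θ / ((1 - p1) * μb)) * ∑ j ∈ Finset.range k, r ^ j * al ^ (k - 1 - j))
    (hal1 : al < 1) :
    Summable (fun k : ℕ => (k : ℝ) * π0 k) ∧
    (∑' k : ℕ, (k : ℝ) * π0 k) / (∑' k : ℕ, π0 k)
      = p0 * (1 - θ) / (θ + (1 - θ) * μv * (1 - r)) :=
  stmt_8_general μb μv θ p0 p1 al be r K π0 hμb hμv hθ hp0m hp1m hbe hr hK hπ00 hπ0k hal1
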